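/- Let f : ℝ → ℝ be C², let μ be a root of f with f'(μ) ≠ 0. Then the secant iteration x_{n+1} = x_n − f(x_n)(x_n − x_{n−1})/(f(x_n) − f(x_{n−1})) converges to μ whenever the initial points x₀, x₁ are distinct and sufficiently close to μ, and the convergence is superlinear: |x_{n+1} − μ| ≤ C |x_n − μ| |x_{n−1} − μ| for some constant C. -/

import Mathlib

open Filter

/-- Superlinear local convergence of the secant method: if `f` is `C²` near a
root `μ` with `f'(μ) ≠ 0`, then there are `δ > 0` and `C > 0` such that any
well-defined secant iteration
`x (n+2) = x (n+1) - f (x (n+1)) * (x (n+1) - x n) / (f (x (n+1)) - f (x n))`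
started from distinct points `x 0, x 1` within distance `δ` of `μ` converges
to `μ`, with `|x (n+2) - μ| ≤ C * |x (n+1) - μ| * |x n - μ|` for all `n`. -/
theorem secant_method_superlinear (f : ℝ → ℝ) (μ : ℝ)
    (hf : ContDiffAt ℝ 2 f μ) (hroot : f μ = 0) (hderiv : deriv f μ ≠ 0) :
    ∃ δ > (0 : ℝ), ∃ C > (0 : ℝ), ∀ x : ℕ → ℝ,
      |x 0 - μ| < δ → |x 1 - μ| < δ → x 0 ≠ x 1 →
      (∀ n, f (x (n + 1)) ≠ f (x n) ∧
        x (n + 2) = x (n + 1) -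
          f (x (n + 1)) * (x (n + 1) - x n) / (f (x (n + 1)) - f (x n))) →
      Filter.Tendsto x Filter.atTop (nhds μ) ∧
      ∀ n, |x (n + 2) - μ| ≤ C * |x (n + 1) - μ| * |x n - μ| := by
  classical
  -- C² neighborhood
  obtain ⟨u, hu, hfu⟩ := hf.contDiffOn le_rfl (by simp)
  set v := interior u with hvdef
  have hvo : IsOpen v := isOpen_interior
  have hμv : μ ∈ v := mem_interior_iff_mem_nhds.2 hu
  have hfv : ContDiffOn ℝ 2 f v := hfu.mono interior_subset
  have hd : ContDiffOn ℝ 1 (deriv f) v := hfv.deriv_of_isOpen hvo (by norm_num)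
  have hd1 : ContDiffAt ℝ 1 (deriv f) μ := (hd μ hμv).contDiffAt (hvo.mem_nhds hμv)
  obtain ⟨K, t, ht, hK⟩ := hd1.exists_lipschitzOnWith
  have hdf : DifferentiableOn ℝ f v := hfv.differentiableOn (by norm_num)
  -- constants
  obtain ⟨m0, hm0, hm0lt⟩ : ∃ m0 : ℝ, 0 < m0 ∧ m0 < |deriv f μ| := by
    have : 0 < |deriv f μ| := abs_pos.2 hderiv
    exact ⟨|deriv f μ| / 2, by linarith, by linarith⟩
  obtain ⟨L, hL0, hKL⟩ : ∃ L : ℝ, 0 < L ∧ (K : ℝ) ≤ L :=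
    ⟨(K : ℝ) + 1, by positivity, by linarith [K.coe_nonneg]⟩
  obtain ⟨C, hC, hCeq⟩ : ∃ C : ℝ, 0 < C ∧ C * m0 = 2 * L :=
    ⟨2 * L / m0, by positivity, by field_simp⟩
  -- neighborhood where everything holds
  have hlowset : {y : ℝ | m0 < |deriv f y|} ∈ nhds μ := by
    have hca : ContinuousAt (fun y => |deriv f y|) μ := hd1.continuousAt.abs
    exact hca.preimage_mem_nhds (Ioi_mem_nhds hm0lt)
  have hS : (v ∩ t) ∩ {y : ℝ | m0 < |deriv f y|} ∈ nhds μ :=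
    Filter.inter_mem (Filter.inter_mem (hvo.mem_nhds hμv) ht) hlowset
  obtain ⟨r, hr0, hrS⟩ := Metric.nhds_basis_closedBall.mem_iff.1 hS
  set B : Set ℝ := Metric.closedBall μ r with hBdef
  have hμB : μ ∈ B := Metric.mem_closedBall_self hr0.le
  have hBv : ∀ y ∈ B, y ∈ v := fun y hy => (hrS hy).1.1
  have hBt : ∀ y ∈ B, y ∈ t := fun y hy => (hrS hy).1.2
  have hlow : ∀ y ∈ B, m0 ≤ |deriv f y| := fun y hy => (hrS hy).2.le
  have hlip : ∀ a ∈ B, ∀ b ∈ B, |deriv f a - deriv f b| ≤ L * |a - b| := by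
    intro a ha b hb
    have h := hK.dist_le_mul a (hBt a ha) b (hBt b hb)
    rw [Real.dist_eq, Real.dist_eq] at h
    calc |deriv f a - deriv f b| ≤ (K : ℝ) * |a - b| := h
      _ ≤ L * |a - b| := mul_le_mul_of_nonneg_right hKL (abs_nonneg _)
  have hIccB : ∀ p q : ℝ, p ∈ B → q ∈ B → Set.Icc p q ⊆ B := fun p q hp hq =>
    (convex_closedBall μ r).ordConnected.out hp hq
  have hder : ∀ y ∈ B, HasDerivAt f (deriv f y) y := fun y hy =>
    ((hdf.differentiableAt (hvo.mem_nhds (hBv y hy)))).hasDerivAt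
  -- mean value theorem for f
  have hslope : ∀ p q : ℝ, p ∈ B → q ∈ B → p < q →
      ∃ c ∈ Set.Ioo p q, f q - f p = deriv f c * (q - p) := by
    intro p q hp hq hpq
    have hIcc : Set.Icc p q ⊆ B := hIccB p q hp hq
    have hcont : ContinuousOn f (Set.Icc p q) :=
      (hdf.continuousOn).mono (fun y hy => hBv y (hIcc hy))
    have hdiff : DifferentiableOn ℝ f (Set.Ioo p q) :=
      hdf.mono (fun y hy => hBv y (hIcc (Set.Ioo_subset_Icc_self hy)))
    obtain ⟨c, hc, hceq⟩ := exists_deriv_eq_slope f hpq hcont hdiff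
    refine ⟨c, hc, ?_⟩
    rw [hceq]
    exact (div_mul_cancel₀ _ (sub_ne_zero.2 hpq.ne')).symm
  -- the auxiliary function g
  set g : ℝ → ℝ := fun y => f y - deriv f μ * (y - μ) with hgdef
  have hg0 : g μ = 0 := by simp [hgdef, hroot]
  have hgd : ∀ y ∈ B, HasDerivAt g (deriv f y - deriv f μ) y := by
    intro y hy
    have h1 : HasDerivAt (fun z : ℝ => deriv f μ * (z - μ)) (deriv f μ) y := by
      simpa using ((hasDerivAt_id y).sub_const μ).const_mul (deriv f μ)
    exact (hder y hy).sub h1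
  have hgslope : ∀ p q : ℝ, p ∈ B → q ∈ B → p < q →
      ∃ c ∈ Set.Ioo p q, g q - g p = (deriv f c - deriv f μ) * (q - p) := by
    intro p q hp hq hpq
    have hIcc : Set.Icc p q ⊆ B := hIccB p q hp hq
    have hcont : ContinuousOn g (Set.Icc p q) := fun y hy =>
      ((hgd y (hIcc hy)).continuousAt).continuousWithinAt
    obtain ⟨c, hc, hceq⟩ := exists_hasDerivAt_eq_slope g (fun z => deriv f z - deriv f μ)
      hpq hcont (fun y hy => hgd y (hIcc (Set.Ioo_subset_Icc_self hy)))
    refine ⟨c, hc, ?_⟩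
    rw [hceq]
    exact (div_mul_cancel₀ _ (sub_ne_zero.2 hpq.ne')).symm
  -- second-order bound for g
  have hgbound : ∀ y ∈ B, |g y| ≤ L * (|y - μ| * |y - μ|) := by
    intro y hy
    rcases lt_trichotomy y μ with h | h | h
    · obtain ⟨c, hc, hceq⟩ := hgslope y μ hy hμB h
      have hcB : c ∈ B := hIccB y μ hy hμB ⟨hc.1.le, hc.2.le⟩
      have h1 : |deriv f c - deriv f μ| ≤ L * |c - μ| := hlip c hcB μ hμB
      have h2 : |c - μ| ≤ |y - μ| := by
        rw [abs_of_nonpos (by linarith [hc.2] : c - μ ≤ 0),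
          abs_of_nonpos (by linarith : y - μ ≤ 0)]
        linarith [hc.1]
      have hgy : g y = -((deriv f c - deriv f μ) * (μ - y)) := by
        rw [hg0] at hceq; linarith
      rw [hgy, abs_neg, abs_mul]
      have h3 : |μ - y| = |y - μ| := abs_sub_comm μ y
      rw [h3]
      calc |deriv f c - deriv f μ| * |y - μ| ≤ (L * |c - μ|) * |y - μ| :=
            mul_le_mul_of_nonneg_right h1 (abs_nonneg _)
        _ ≤ (L * |y - μ|) * |y - μ| :=
            mul_le_mul_of_nonneg_right
              (mul_le_mul_of_nonneg_left h2 hL0.le) (abs_nonneg _)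
        _ = L * (|y - μ| * |y - μ|) := by ring
    · simp [h, hg0]
    · obtain ⟨c, hc, hceq⟩ := hgslope μ y hμB hy h
      have hcB : c ∈ B := hIccB μ y hμB hy ⟨hc.1.le, hc.2.le⟩
      have h1 : |deriv f c - deriv f μ| ≤ L * |c - μ| := hlip c hcB μ hμB
      have h2 : |c - μ| ≤ |y - μ| := by
        rw [abs_of_nonneg (by linarith [hc.1] : (0:ℝ) ≤ c - μ),
          abs_of_nonneg (by linarith : (0:ℝ) ≤ y - μ)]
        linarith [hc.2]
      have hgy : g y = (deriv f c - deriv f μ) * (y - μ) := by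
        rw [hg0] at hceq; linarith
      rw [hgy, abs_mul]
      calc |deriv f c - deriv f μ| * |y - μ| ≤ (L * |c - μ|) * |y - μ| :=
            mul_le_mul_of_nonneg_right h1 (abs_nonneg _)
        _ ≤ (L * |y - μ|) * |y - μ| :=
            mul_le_mul_of_nonneg_right
              (mul_le_mul_of_nonneg_left h2 hL0.le) (abs_nonneg _)
        _ = L * (|y - μ| * |y - μ|) := by ring
  -- Lipschitz-type bound for differences of g
  have hgab : ∀ a ∈ B, ∀ b ∈ B, |g a - g b| ≤ L * max |a - μ| |b - μ| * |a - b| := by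
    intro a ha b hb
    rcases lt_trichotomy a b with h | h | h
    · obtain ⟨c, hc, hceq⟩ := hgslope a b ha hb h
      have hcB : c ∈ B := hIccB a b ha hb ⟨hc.1.le, hc.2.le⟩
      have h1 : |deriv f c - deriv f μ| ≤ L * |c - μ| := hlip c hcB μ hμB
      have h2 : |c - μ| ≤ max |a - μ| |b - μ| := by
        rw [abs_le]
        constructor
        · have := neg_abs_le (a - μ)
          have := le_max_left |a - μ| |b - μ|
          linarith [hc.1]
        · have := le_abs_self (b - μ)
          have := le_max_right |a - μ| |b - μ|
          linarith [hc.2]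
      have hgy : g a - g b = (deriv f c - deriv f μ) * (a - b) := by
        linarith [hceq]
      rw [hgy, abs_mul]
      calc |deriv f c - deriv f μ| * |a - b| ≤ (L * |c - μ|) * |a - b| :=
            mul_le_mul_of_nonneg_right h1 (abs_nonneg _)
        _ ≤ L * max |a - μ| |b - μ| * |a - b| :=
            mul_le_mul_of_nonneg_right
              (mul_le_mul_of_nonneg_left h2 hL0.le) (abs_nonneg _)
    · simp [h]
    · obtain ⟨c, hc, hceq⟩ := hgslope b a hb ha h
      have hcB : c ∈ B := hIccB b a hb ha ⟨hc.1.le, hc.2.le⟩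
      have h1 : |deriv f c - deriv f μ| ≤ L * |c - μ| := hlip c hcB μ hμB
      have h2 : |c - μ| ≤ max |a - μ| |b - μ| := by
        rw [abs_le]
        constructor
        · have := neg_abs_le (b - μ)
          have := le_max_right |a - μ| |b - μ|
          linarith [hc.1]
        · have := le_abs_self (a - μ)
          have := le_max_left |a - μ| |b - μ|
          linarith [hc.2]
      have hgy : g a - g b = (deriv f c - deriv f μ) * (a - b) := by
        linarith [hceq]
      rw [hgy, abs_mul]
      calc |deriv f c - deriv f μ| * |a - b| ≤ (L * |c - μ|) * |a - b| :=
            mul_le_mul_of_nonneg_right h1 (abs_nonneg _)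
        _ ≤ L * max |a - μ| |b - μ| * |a - b| :=
            mul_le_mul_of_nonneg_right
              (mul_le_mul_of_nonneg_left h2 hL0.le) (abs_nonneg _)
  -- the key one-step estimate
  have key : ∀ a ∈ B, ∀ b ∈ B, f a ≠ f b →
      |(a - f a * (a - b) / (f a - f b)) - μ| ≤ C * |a - μ| * |b - μ| := by
    intro a ha b hb hfab
    have hab : a ≠ b := fun h => hfab (by rw [h])
    have hD : f a - f b ≠ 0 := sub_ne_zero.2 hfab
    have habs0 : (0:ℝ) < |a - b| := abs_pos.2 (sub_ne_zero.2 hab)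
    -- denominator lower bound
    have hden : m0 * |a - b| ≤ |f a - f b| := by
      rcases hab.lt_or_gt with h | h
      · obtain ⟨c, hc, hceq⟩ := hslope a b ha hb h
        have hcB : c ∈ B := hIccB a b ha hb ⟨hc.1.le, hc.2.le⟩
        have hE : f a - f b = deriv f c * (a - b) := by linear_combination -hceq
        rw [hE, abs_mul]
        exact mul_le_mul_of_nonneg_right (hlow c hcB) (abs_nonneg _)
      · obtain ⟨c, hc, hceq⟩ := hslope b a hb ha h
        have hcB : c ∈ B := hIccB b a hb ha ⟨hc.1.le, hc.2.le⟩
        have hE : f a - f b = deriv f c * (a - b) := by linear_combination hceq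
        rw [hE, abs_mul]
        exact mul_le_mul_of_nonneg_right (hlow c hcB) (abs_nonneg _)
    set N : ℝ := g a * (b - μ) - g b * (a - μ) with hN
    have hNbound : |N| ≤ 2 * L * (|a - μ| * |b - μ|) * |a - b| := by
      have e2 := hgbound a ha
      have e3 := hgbound b hb
      have e1 := hgab a ha b hb
      rcases le_total |b - μ| |a - μ| with hm | hm
      · have e1' : |g a - g b| ≤ L * |a - μ| * |a - b| := by
          rw [max_eq_left hm] at e1; exact e1
        have habs' : |N| ≤ |g a - g b| * |b - μ| + |g b| * |a - b| := by
          have hsplit : N = (g a - g b) * (b - μ) + g b * (b - a) := by rw [hN]; ring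
          rw [hsplit]
          refine (abs_add_le _ _).trans ?_
          rw [abs_mul, abs_mul, abs_sub_comm b a]
        have h5 := mul_le_mul_of_nonneg_right e1' (abs_nonneg (b - μ))
        have h6 := mul_le_mul_of_nonneg_right e3 (abs_nonneg (a - b))
        have h7 := mul_le_mul_of_nonneg_right
          (mul_le_mul_of_nonneg_left
            (mul_le_mul_of_nonneg_right hm (abs_nonneg (b - μ))) hL0.le)
          (abs_nonneg (a - b))
        nlinarith [habs', h5, h6, h7]
      · have e1' : |g a - g b| ≤ L * |b - μ| * |a - b| := by
          rw [max_eq_right hm] at e1; exact e1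
        have habs' : |N| ≤ |g a - g b| * |a - μ| + |g a| * |a - b| := by
          have hsplit : N = (g a - g b) * (a - μ) + g a * (b - a) := by rw [hN]; ring
          rw [hsplit]
          refine (abs_add_le _ _).trans ?_
          rw [abs_mul, abs_mul, abs_sub_comm b a]
        have h5 := mul_le_mul_of_nonneg_right e1' (abs_nonneg (a - μ))
        have h6 := mul_le_mul_of_nonneg_right e2 (abs_nonneg (a - b))
        have h7 := mul_le_mul_of_nonneg_right
          (mul_le_mul_of_nonneg_left
            (mul_le_mul_of_nonneg_right hm (abs_nonneg (a - μ))) hL0.le)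
          (abs_nonneg (a - b))
        nlinarith [habs', h5, h6, h7]
    have hxeq : a - f a * (a - b) / (f a - f b) - μ = N / (f a - f b) := by
      rw [hN]
      simp only [hgdef]
      field_simp
      ring
    rw [hxeq, abs_div, div_le_iff₀ (abs_pos.2 hD)]
    calc |N| ≤ 2 * L * (|a - μ| * |b - μ|) * |a - b| := hNbound
      _ = C * |a - μ| * |b - μ| * (m0 * |a - b|) := by
          linear_combination (-(|a - μ| * |b - μ| * |a - b|)) * hCeq
      _ ≤ C * |a - μ| * |b - μ| * |f a - f b| := by
          exact mul_le_mul_of_nonneg_left hden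
            (mul_nonneg (mul_nonneg hC.le (abs_nonneg _)) (abs_nonneg _))
  -- choose δ
  obtain ⟨δ, hδ0, hδr, hCδ⟩ : ∃ δ : ℝ, 0 < δ ∧ δ ≤ r ∧ C * δ ≤ 1 / 2 := by
    refine ⟨min r (1 / (2 * C)), lt_min hr0 (by positivity), min_le_left _ _, ?_⟩
    have h1 : min r (1 / (2 * C)) ≤ 1 / (2 * C) := min_le_right _ _
    calc C * min r (1 / (2 * C)) ≤ C * (1 / (2 * C)) :=
          mul_le_mul_of_nonneg_left h1 hC.le
      _ = 1 / 2 := by field_simp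
  have hmem : ∀ y : ℝ, |y - μ| < δ → y ∈ B := by
    intro y hy
    rw [hBdef, Metric.mem_closedBall, Real.dist_eq]
    linarith
  refine ⟨δ, hδ0, C, hC, ?_⟩
  intro x h0 h1 hne hrec
  have hin : ∀ n, |x n - μ| < δ ∧ |x (n + 1) - μ| < δ := by
    intro n
    induction n with
    | zero => exact ⟨h0, h1⟩
    | succ n ih =>
      obtain ⟨ha, hb⟩ := ih
      refine ⟨hb, ?_⟩
      have hk := key (x (n + 1)) (hmem _ hb) (x n) (hmem _ ha) (hrec n).1
      rw [← (hrec n).2] at hk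
      have h2 : C * |x (n + 1) - μ| * |x n - μ| ≤ (C * δ) * |x n - μ| := by
        exact mul_le_mul_of_nonneg_right
          (mul_le_mul_of_nonneg_left hb.le hC.le) (abs_nonneg _)
      have h3 : (C * δ) * |x n - μ| ≤ (1 / 2) * |x n - μ| :=
        mul_le_mul_of_nonneg_right hCδ (abs_nonneg _)
      have := abs_nonneg (x n - μ)
      calc |x (n + 2) - μ| ≤ C * |x (n + 1) - μ| * |x n - μ| := hk
        _ ≤ (1 / 2) * |x n - μ| := le_trans h2 h3
        _ < δ := by linarith
  have hstep : ∀ n, |x (n + 2) - μ| ≤ C * |x (n + 1) - μ| * |x n - μ| := by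
    intro n
    have hk := key (x (n + 1)) (hmem _ (hin n).2) (x n) (hmem _ (hin n).1) (hrec n).1
    rw [← (hrec n).2] at hk
    exact hk
  have hhalf : ∀ n, |x (n + 2) - μ| ≤ (1 / 2) * |x n - μ| := by
    intro n
    have h2 : C * |x (n + 1) - μ| * |x n - μ| ≤ (C * δ) * |x n - μ| :=
      mul_le_mul_of_nonneg_right
        (mul_le_mul_of_nonneg_left (hin n).2.le hC.le) (abs_nonneg _)
    have h3 : (C * δ) * |x n - μ| ≤ (1 / 2) * |x n - μ| :=
      mul_le_mul_of_nonneg_right hCδ (abs_nonneg _)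
    exact le_trans (hstep n) (le_trans h2 h3)
  have hdecay : ∀ n, |x n - μ| ≤ δ * (1 / 2 : ℝ) ^ (n / 2) ∧
      |x (n + 1) - μ| ≤ δ * (1 / 2 : ℝ) ^ ((n + 1) / 2) := by
    intro n
    induction n with
    | zero => exact ⟨by simpa using h0.le, by simpa using h1.le⟩
    | succ n ih =>
      refine ⟨ih.2, ?_⟩
      have h2 : (n + 2) / 2 = n / 2 + 1 := by omega
      calc |x (n + 2) - μ| ≤ (1 / 2) * |x n - μ| := hhalf n
        _ ≤ (1 / 2) * (δ * (1 / 2 : ℝ) ^ (n / 2)) := by linarith [ih.1]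
        _ = δ * (1 / 2 : ℝ) ^ ((n + 2) / 2) := by rw [h2, pow_succ]; ring
  constructor
  · have hgeo : Tendsto (fun n : ℕ => δ * (1 / 2 : ℝ) ^ (n / 2)) atTop (nhds 0) := by
      have hq : Tendsto (fun n : ℕ => n / 2) atTop atTop :=
        tendsto_atTop_atTop.2 fun b => ⟨2 * b, fun n hn => by omega⟩
      have hp : Tendsto (fun n : ℕ => (1 / 2 : ℝ) ^ n) atTop (nhds 0) :=
        tendsto_pow_atTop_nhds_zero_of_lt_one (by norm_num) (by norm_num)
      have := (hp.comp hq).const_mul δ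
      simpa using this
    have habs : Tendsto (fun n => |x n - μ|) atTop (nhds 0) :=
      squeeze_zero (fun n => abs_nonneg _) (fun n => (hdecay n).1) hgeo
    rw [tendsto_iff_dist_tendsto_zero]
    simpa [Real.dist_eq] using habs
  · exact hstep
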